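/- arXiv:2109.06683 — 2 statements merged into one kernel-verified Lean document; each statement's English description precedes it below -/
import Mathlib

section
/- Assume N = 1 and Q satisfies (H-EL). Let u₀ ∈ 𝒜 and let u be a solution of (P_{u₀}) with supp u = [−r̄, r̄], r̄ < ∞, and u' < 0 on (0, r̄). Then u(x) / ((A(m+1)²/2)^{1/(m+1)}·(r̄ − x)^{2/(m+1)}) → 1 as x → r̄⁻, and u'(x) / (−(2/(m+1))·(A(m+1)²/2)^{1/(m+1)}·(r̄ − x)^{(1−m)/(m+1)}) → 1 as x → r̄⁻; in particular ∫_{−r̄}^{r̄} u'(x)² dx < ∞. -/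
open MeasureTheory Filter Set

noncomputable section

/-- Hypothesis (H): `Q` is continuous on `(0,∞)`, vanishes on `(-∞,0]`, is bounded below,
and `Q(s) ~ A·s^(1-m)` as `s → 0⁺`. -/
def HypH (Q : ℝ → ℝ) (A m : ℝ) : Prop :=
  ContinuousOn Q (Set.Ioi 0) ∧ (∀ s : ℝ, s ≤ 0 → Q s = 0) ∧ BddBelow (Set.range Q) ∧
  0 < A ∧ 1 < m ∧
  Filter.Tendsto (fun s : ℝ => Q s / (A * s ^ (1 - m))) (nhdsWithin 0 (Set.Ioi 0)) (nhds 1)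

/-- `Q` is C¹ on `(0,∞)`. -/
def HypC1 (Q : ℝ → ℝ) : Prop :=
  (∀ s : ℝ, 0 < s → DifferentiableAt ℝ Q s) ∧ ContinuousOn (deriv Q) (Set.Ioi 0)

/-- Hypothesis (H-EL1): (H) with `1 < m < 3` and `Q` of class C¹ on `(0,∞)`. -/
def HypHEL1 (Q : ℝ → ℝ) (A m : ℝ) : Prop := HypH Q A m ∧ m < 3 ∧ HypC1 Q

/-- Hypothesis (H-EL): (H-EL1) together with `|s·Q'(s)| ≤ C·Q(s)` for `s` small. -/
def HypHEL (Q : ℝ → ℝ) (A m : ℝ) : Prop :=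
  HypHEL1 Q A m ∧ ∃ C > (0:ℝ), ∃ s₀ > (0:ℝ), ∀ s : ℝ, 0 < s → s < s₀ →
    |s * deriv Q s| ≤ C * Q s

/-- `R(s) = Q(s)/s`. -/
def Rfun (Q : ℝ → ℝ) : ℝ → ℝ := fun s => Q s / s

/-- Hypothesis (H-R): `R' ≠ 0` on `(0,δ) ∪ (1/δ,∞)` for some `δ ∈ (0,1)`. -/
def HypHR (Q : ℝ → ℝ) : Prop :=
  ∃ δ : ℝ, 0 < δ ∧ δ < 1 ∧ ∀ s : ℝ, (0 < s ∧ s < δ) ∨ 1/δ < s → deriv (Rfun Q) s ≠ 0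

/-- `u ∈ H¹(ℝ)` with weak derivative `g`: `u` is continuous, `u, g ∈ L²`, and the
fundamental theorem of calculus holds. -/
def MemH1 (u g : ℝ → ℝ) : Prop :=
  Continuous u ∧ MeasureTheory.MemLp u 2 MeasureTheory.volume ∧
  MeasureTheory.MemLp g 2 MeasureTheory.volume ∧
  ∀ a b : ℝ, a ≤ b → u b - u a = ∫ t in a..b, g t

/-- `u ∈ D_M` (with weak derivative `g`): `u ∈ H¹(ℝ)`, `u ≥ 0`, `∫ u = M`. -/
def InD (M : ℝ) (u g : ℝ → ℝ) : Prop :=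
  MemH1 u g ∧ (∀ x, 0 ≤ u x) ∧ (∫ x, u x) = M

/-- The energy `E[u] = ∫ (½ u'² + Q(u))`. -/
def Energy (Q u g : ℝ → ℝ) : ℝ := ∫ x, ((1/2) * (g x)^2 + Q (u x))

/-- `u` is a (global) minimizer of `E` in `D_M`. -/
def IsMinimizer (Q : ℝ → ℝ) (M : ℝ) (u : ℝ → ℝ) : Prop :=
  ∃ g, InD M u g ∧ MeasureTheory.Integrable (fun x => Q (u x)) ∧
    ∀ v h, InD M v h → MeasureTheory.Integrable (fun x => Q (v x)) →
      Energy Q u g ≤ Energy Q v h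

/-- The admissible set `𝒜 = {s > 0 : R'(s) < 0 and R(t) > R(s) for all 0 < t < s}`. -/
def Aset (Q : ℝ → ℝ) : Set ℝ :=
  {s : ℝ | 0 < s ∧ deriv (Rfun Q) s < 0 ∧ ∀ t, 0 < t → t < s → Rfun Q s < Rfun Q t}

/-- `e` is the smallest global minimum point of `R` on `(0,∞)` (so `e_* = e < ∞`). -/
def IsEStar (Q : ℝ → ℝ) (e : ℝ) : Prop :=
  0 < e ∧ (∀ t, 0 < t → Rfun Q e ≤ Rfun Q t) ∧
    ∀ s, 0 < s → (∀ t, 0 < t → Rfun Q s ≤ Rfun Q t) → e ≤ s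

/-- `R` attains no global minimum on `(0,∞)` (so `e_* = +∞`). -/
def EStarInfinite (Q : ℝ → ℝ) : Prop :=
  ¬ ∃ s : ℝ, 0 < s ∧ ∀ t, 0 < t → Rfun Q s ≤ Rfun Q t

/-- A solution of problem `(P_{u₀})`: nonnegative, even, continuous, with positivity set
`(-r̄, r̄)` (`r̄ ∈ (0,+∞]`), C² there, solving `-u'' + Q'(u) = R(u₀)`, `u(0) = u₀`, `u'(0) = 0`. -/
def IsPSol (Q : ℝ → ℝ) (u₀ : ℝ) (u : ℝ → ℝ) (r : EReal) : Prop :=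
  0 < r ∧ (∀ x, 0 ≤ u x) ∧ (∀ x, u (-x) = u x) ∧ Continuous u ∧
  {x : ℝ | 0 < u x} = {x : ℝ | -r < (x : EReal) ∧ (x : EReal) < r} ∧
  ContDiffOn ℝ 2 u {x : ℝ | 0 < u x} ∧
  (∀ x : ℝ, -r < (x : EReal) → (x : EReal) < r →
    -(deriv (deriv u) x) + deriv Q (u x) = Rfun Q u₀) ∧
  u 0 = u₀ ∧ deriv u 0 = 0

/-!
Multiplying the equation by `u'` gives the first integral `u'² = 2 (Q(u) - R(u₀) u)`. As
`x → r̄⁻` we have `u → 0⁺` and `Q(s) ~ A s^(1-m)`, hence `u' ~ -√(2A) u^((1-m)/2)`. For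
`v = u^((m+1)/2)` this says `v' → -(m+1)/2 · √(2A)`, so by L'Hôpital
`v ~ (m+1)/2 · √(2A) (r̄ - x)`, which is the asymptotics of `u`; substituting it back gives that
of `u'`. Finally `u'² = O((r̄ - x)^(2(1-m)/(m+1)))` near `r̄`, an integrable singularity exactly
because `m < 3`, and `u'²` is even.
-/

open Topology Asymptotics

theorem tendsto_div_neg_sqrt_of_tendsto_sq_div {α : Type*} {l : Filter α} {f g : α → ℝ}
    (hf : ∀ᶠ x in l, f x < 0) (h : Tendsto (fun x => f x ^ 2 / g x) l (𝓝 1)) :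
    Tendsto (fun x => f x / -√(g x)) l (𝓝 1) := by
  have := (Real.continuous_sqrt.tendsto 1).comp h
  rw [Real.sqrt_one] at this
  refine this.congr' (hf.mono fun x hx => ?_)
  simp only [Function.comp_apply, Real.sqrt_div (sq_nonneg _), Real.sqrt_sq_eq_abs,
    abs_of_neg hx, div_neg, neg_div]

theorem tendsto_sub_mul_div_rpow {Q : ℝ → ℝ} {A m : ℝ} (ρ : ℝ) (hA : A ≠ 0)
    (hm : 0 < m) (hQ : Tendsto (fun s => Q s / (A * s ^ (1 - m))) (𝓝[>] 0) (𝓝 1)) :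
    Tendsto (fun s => (Q s - ρ * s) / (A * s ^ (1 - m))) (𝓝[>] 0) (𝓝 1) := by
  have hpow : Tendsto (fun s : ℝ => ρ / A * s ^ m) (𝓝[>] 0) (𝓝 0) := by
    have := (Real.continuousAt_rpow_const 0 m (Or.inr hm.le)).tendsto.const_mul (ρ / A)
    rw [Real.zero_rpow hm.ne', mul_zero] at this
    exact this.mono_left nhdsWithin_le_nhds
  have := hQ.sub hpow
  rw [sub_zero] at this
  refine this.congr' (eventually_mem_nhdsWithin.mono fun s (hs : 0 < s) => ?_)
  have : s ^ m = s / s ^ (1 - m) := by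
    rw [Real.rpow_sub hs, Real.rpow_one, div_div_cancel₀ hs.ne']
  rw [this]
  field_simp

section ContactLine

variable {u u' : ℝ → ℝ} {r q k : ℝ}

theorem tendsto_rpow_div_sub_of_tendsto_deriv (hq : 0 < q) (hk : k ≠ 0)
    (hu : ∀ᶠ x in 𝓝[<] r, HasDerivAt u (u' x) x) (hpos : ∀ᶠ x in 𝓝[<] r, 0 < u x)
    (hlim : Tendsto u (𝓝[<] r) (𝓝 0))
    (hder : Tendsto (fun x => u' x / -(k * u x ^ (1 - q))) (𝓝[<] r) (𝓝 1)) :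
    Tendsto (fun x => u x ^ q / (r - x)) (𝓝[<] r) (𝓝 (q * k)) := by
  refine HasDerivAt.lhopital_zero_nhdsLT (f' := fun x => u' x * q * u x ^ (q - 1))
    (g' := fun _ => -1) ?_ ?_ (by simp) ?_ ?_ ?_
  · filter_upwards [hu, hpos] with x hx hx0 using hx.rpow_const (Or.inl hx0.ne')
  · exact Eventually.of_forall fun x => by simpa using (hasDerivAt_id x).const_sub r
  · simpa [Function.comp_def, Real.zero_rpow hq.ne'] using
      (Real.continuousAt_rpow_const 0 q (Or.inr hq.le)).tendsto.comp hlim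
  · simpa using (tendsto_nhdsWithin_of_tendsto_nhds
      ((continuous_const.sub continuous_id).tendsto r) : Tendsto (fun x : ℝ => r - x) _ _)
  · have := hder.const_mul (q * k)
    rw [mul_one] at this
    refine this.congr' (hpos.mono fun x hx => ?_)
    simp only [show q - 1 = -(1 - q) by ring, Real.rpow_neg hx.le]
    have := (Real.rpow_pos_of_pos hx (1 - q)).ne'
    field_simp

theorem tendsto_div_rpow_sub_of_tendsto_deriv (hq : 0 < q) (hk : 0 < k)
    (hu : ∀ᶠ x in 𝓝[<] r, HasDerivAt u (u' x) x) (hpos : ∀ᶠ x in 𝓝[<] r, 0 < u x)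
    (hlim : Tendsto u (𝓝[<] r) (𝓝 0))
    (hder : Tendsto (fun x => u' x / -(k * u x ^ (1 - q))) (𝓝[<] r) (𝓝 1)) :
    Tendsto (fun x => u x / ((q * k) ^ q⁻¹ * (r - x) ^ q⁻¹)) (𝓝[<] r) (𝓝 1) := by
  have hqk : 0 < q * k := mul_pos hq hk
  have h := (tendsto_rpow_div_sub_of_tendsto_deriv hq hk.ne' hu hpos hlim hder).div_const (q * k)
  rw [div_self hqk.ne'] at h
  have := (Real.continuousAt_rpow_const 1 q⁻¹ (Or.inl one_ne_zero)).tendsto.comp h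
  rw [Real.one_rpow] at this
  refine this.congr' ((hpos.and self_mem_nhdsWithin).mono fun x ⟨hx, (hxr : x < r)⟩ => ?_)
  have hrx : 0 < r - x := sub_pos.mpr hxr
  simp only [Function.comp_apply, div_div]
  rw [Real.div_rpow (by positivity) (by positivity), Real.rpow_rpow_inv hx.le hq.ne',
    Real.mul_rpow hrx.le hqk.le, mul_comm]

theorem tendsto_deriv_div_rpow_sub_of_tendsto_deriv (hq : 0 < q) (hk : 0 < k)
    (hu : ∀ᶠ x in 𝓝[<] r, HasDerivAt u (u' x) x) (hpos : ∀ᶠ x in 𝓝[<] r, 0 < u x)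
    (hlim : Tendsto u (𝓝[<] r) (𝓝 0))
    (hder : Tendsto (fun x => u' x / -(k * u x ^ (1 - q))) (𝓝[<] r) (𝓝 1)) :
    Tendsto (fun x => u' x / (-q⁻¹ * (q * k) ^ q⁻¹ * (r - x) ^ (q⁻¹ - 1))) (𝓝[<] r)
      (𝓝 1) := by
  have hqk : 0 < q * k := mul_pos hq hk
  have h := (tendsto_div_rpow_sub_of_tendsto_deriv hq hk hu hpos hlim hder).rpow_const
    (p := 1 - q) (Or.inl one_ne_zero)
  rw [Real.one_rpow] at h
  have := hder.mul h
  rw [mul_one] at this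
  refine this.congr' ((hpos.and self_mem_nhdsWithin).mono fun x ⟨hx, (hxr : x < r)⟩ => ?_)
  have hrx : 0 < r - x := sub_pos.mpr hxr
  have hexp : q⁻¹ * (1 - q) = q⁻¹ - 1 := by field_simp
  rw [Real.div_rpow hx.le (by positivity), Real.mul_rpow (by positivity) (by positivity),
    ← Real.rpow_mul hqk.le, ← Real.rpow_mul hrx.le, hexp, Real.rpow_sub_one hqk.ne']
  have := (Real.rpow_pos_of_pos hx (1 - q)).ne'
  have := (Real.rpow_pos_of_pos hrx (q⁻¹ - 1)).ne'
  have := (Real.rpow_pos_of_pos hqk q⁻¹).ne'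
  field_simp

end ContactLine

theorem integrableOn_Ico_of_isBigO_rpow {f : ℝ → ℝ} {a b e : ℝ}
    (hf : ContinuousOn f (Ico a b)) (he : -1 < e) (hO : f =O[𝓝[<] b] fun x => (b - x) ^ e) :
    IntegrableOn f (Ico a b) := by
  rcases le_or_gt b a with hab | hab
  · simp [Ico_eq_empty_of_le hab]
  have hg : IntegrableAtFilter (fun x => (b - x) ^ e) (𝓝[<] b) := by
    refine ⟨Ioo (b - 1) b, Ioo_mem_nhdsLT (by linarith), ?_⟩
    have := (intervalIntegral.intervalIntegrable_rpow' (a := 0) (b := 1) he).comp_sub_left b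
    rw [sub_zero] at this
    exact (this.symm.1).mono_set Ioo_subset_Ioc_self
  have hfm : StronglyMeasurableAtFilter f (𝓝[<] b) :=
    ⟨Ico a b, Ico_mem_nhdsLT hab, hf.aestronglyMeasurable measurableSet_Ico⟩
  obtain ⟨s, hs, hfs⟩ := hO.integrableAtFilter hfm hg
  obtain ⟨c, hcb, hcs⟩ := mem_nhdsLT_iff_exists_Ioo_subset.mp hs
  have hIcc : IntegrableOn f (Icc a c) :=
    (hf.mono fun x hx => ⟨hx.1, hx.2.trans_lt hcb⟩).integrableOn_compact isCompact_Icc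
  refine (hIcc.union (hfs.mono_set hcs)).mono_set fun x hx => ?_
  rcases le_or_gt x c with h | h
  · exact Or.inl ⟨hx.1, h⟩
  · exact Or.inr ⟨h, hx.2⟩

theorem integrableOn_Ioo_neg_of_even {f : ℝ → ℝ} {b : ℝ} (heven : ∀ x, f (-x) = f x)
    (hf : IntegrableOn f (Ico 0 b)) : IntegrableOn f (Ioo (-b) b) := by
  have hneg : IntegrableOn f (Ioc (-b) 0) := by
    have := (MeasurePreserving.integrableOn_comp_preimage (Measure.measurePreserving_neg volume)
      (Homeomorph.neg ℝ).measurableEmbedding).2 hf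
    simpa [Function.comp_def, heven] using this
  refine (hneg.union hf).mono_set fun x hx => ?_
  rcases le_or_gt x 0 with h | h
  · exact Or.inl ⟨hx.1, h⟩
  · exact Or.inr ⟨h.le, hx.2⟩

/-- The first integral of `-u'' + Q'(u) = ρ`. -/
def firstIntegral (Q u : ℝ → ℝ) (ρ x : ℝ) : ℝ := deriv u x ^ 2 / 2 - Q (u x) + ρ * u x

theorem IsOpen.firstIntegral_eq {Q u : ℝ → ℝ} {ρ : ℝ} {s : Set ℝ} (hs : IsOpen s)
    (hs' : IsPreconnected s) (hu : ContDiffOn ℝ 2 u s)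
    (hQ : ∀ x ∈ s, DifferentiableAt ℝ Q (u x))
    (hode : ∀ x ∈ s, deriv (deriv u) x = deriv Q (u x) - ρ) {x y : ℝ} (hx : x ∈ s)
    (hy : y ∈ s) : firstIntegral Q u ρ x = firstIntegral Q u ρ y := by
  have hu' : ContDiffOn ℝ 1 (deriv u) s := hu.deriv_of_isOpen hs (by norm_num)
  have hderiv : ∀ x ∈ s, HasDerivAt (firstIntegral Q u ρ) 0 x := by
    intro x hx
    have h1 := ((hu.differentiableOn (by norm_num)).differentiableAt (hs.mem_nhds hx)).hasDerivAt
    have h2 := ((hu'.differentiableOn one_ne_zero).differentiableAt (hs.mem_nhds hx)).hasDerivAt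
    have h : HasDerivAt (firstIntegral Q u ρ) _ x :=
      (((h2.pow 2).div_const 2).sub ((hQ x hx).hasDerivAt.comp x h1)).add (h1.const_mul ρ)
    refine h.congr_deriv ?_
    rw [hode x hx]
    push_cast
    ring
  exact hs.is_const_of_deriv_eq_zero hs'
    (fun x hx => (hderiv x hx).differentiableAt.differentiableWithinAt)
    (fun x hx => (hderiv x hx).deriv) hx hy

namespace IsPSol

variable {Q u : ℝ → ℝ} {u₀ r : ℝ}

theorem setOf_pos_eq (hsol : IsPSol Q u₀ u r) : {x | 0 < u x} = Ioo (-r) r := by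
  rw [hsol.2.2.2.2.1]
  ext x
  simp only [mem_ofPred_eq, mem_Ioo, ← EReal.coe_neg, EReal.coe_lt_coe_iff]

theorem pos_of_mem (hsol : IsPSol Q u₀ u r) {x : ℝ} (hx : x ∈ Ioo (-r) r) : 0 < u x := by
  rwa [← hsol.setOf_pos_eq] at hx

theorem radius_pos (hsol : IsPSol Q u₀ u r) : 0 < r := by
  exact_mod_cast hsol.1

theorem zero_mem (hsol : IsPSol Q u₀ u r) : (0 : ℝ) ∈ Ioo (-r) r :=
  ⟨neg_neg_iff_pos.mpr hsol.radius_pos, hsol.radius_pos⟩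

theorem contDiffOn (hsol : IsPSol Q u₀ u r) : ContDiffOn ℝ 2 u (Ioo (-r) r) :=
  hsol.setOf_pos_eq ▸ hsol.2.2.2.2.2.1

theorem hasDerivAt (hsol : IsPSol Q u₀ u r) {x : ℝ} (hx : x ∈ Ioo (-r) r) :
    HasDerivAt u (deriv u x) x :=
  ((hsol.contDiffOn.differentiableOn (by norm_num)).differentiableAt
    (isOpen_Ioo.mem_nhds hx)).hasDerivAt

theorem deriv_deriv_eq (hsol : IsPSol Q u₀ u r) {x : ℝ} (hx : x ∈ Ioo (-r) r) :
    deriv (deriv u) x = deriv Q (u x) - Rfun Q u₀ := by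
  have := hsol.2.2.2.2.2.2.1 x (by rw [← EReal.coe_neg]; exact_mod_cast hx.1)
    (by exact_mod_cast hx.2)
  linarith

theorem sq_deriv_eq (hsol : IsPSol Q u₀ u r) (hQ : HypC1 Q) {x : ℝ}
    (hx : x ∈ Ioo (-r) r) : deriv u x ^ 2 = 2 * (Q (u x) - Rfun Q u₀ * u x) := by
  obtain ⟨-, -, -, -, -, -, -, hu0, hu'0⟩ := id hsol
  have hu₀ : 0 < u₀ := hu0 ▸ hsol.pos_of_mem hsol.zero_mem
  have h := isOpen_Ioo.firstIntegral_eq isPreconnected_Ioo hsol.contDiffOn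
    (fun y hy => hQ.1 _ (hsol.pos_of_mem hy)) (fun y hy => hsol.deriv_deriv_eq hy) hx
    hsol.zero_mem
  have hQu₀ : Q u₀ = Rfun Q u₀ * u₀ := (div_mul_cancel₀ _ hu₀.ne').symm
  simp only [firstIntegral, hu0, hu'0, hQu₀] at h
  linarith

theorem apply_radius_eq_zero (hsol : IsPSol Q u₀ u r) : u r = 0 := by
  have : r ∉ {x | 0 < u x} := by simp [hsol.setOf_pos_eq]
  exact le_antisymm (not_lt.mp this) (hsol.2.1 r)

theorem tendsto_nhdsGT_zero (hsol : IsPSol Q u₀ u r) : Tendsto u (𝓝[<] r) (𝓝[>] 0) := by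
  refine tendsto_nhdsWithin_iff.mpr ⟨?_, ?_⟩
  · simpa [hsol.apply_radius_eq_zero] using (hsol.2.2.2.1.tendsto r).mono_left nhdsWithin_le_nhds
  · filter_upwards [Ioo_mem_nhdsLT (neg_lt_self hsol.radius_pos)] with x hx
    exact hsol.pos_of_mem hx

theorem tendsto_deriv_div_rpow {A m : ℝ} (hsol : IsPSol Q u₀ u r) (hQ : HypH Q A m)
    (hQ' : HypC1 Q) (hdec : ∀ᶠ x in 𝓝[<] r, deriv u x < 0) :
    Tendsto (fun x => deriv u x / -(√(2 * A) * u x ^ (1 - (m + 1) / 2))) (𝓝[<] r)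
      (𝓝 1) := by
  obtain ⟨-, -, -, hA, hm, hasymp⟩ := hQ
  have hnear : ∀ᶠ x in 𝓝[<] r, x ∈ Ioo (-r) r :=
    Ioo_mem_nhdsLT (neg_lt_self hsol.radius_pos)
  have hsq : Tendsto (fun x => deriv u x ^ 2 / (2 * A * u x ^ (1 - m))) (𝓝[<] r) (𝓝 1) := by
    refine ((tendsto_sub_mul_div_rpow (Rfun Q u₀) hA.ne' (by linarith) hasymp).comp
      hsol.tendsto_nhdsGT_zero).congr' (hnear.mono fun x hx => ?_)
    have := (Real.rpow_pos_of_pos (hsol.pos_of_mem hx) (1 - m)).ne'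
    simp only [Function.comp_apply, hsol.sq_deriv_eq hQ' hx]
    field_simp
  refine (tendsto_div_neg_sqrt_of_tendsto_sq_div hdec hsq).congr' (hnear.mono fun x hx => ?_)
  rw [Real.sqrt_mul (by positivity), Real.sqrt_eq_rpow (_ ^ _),
    ← Real.rpow_mul (hsol.pos_of_mem hx).le]
  ring_nf

theorem integrableOn_sq_deriv {e : ℝ} (hsol : IsPSol Q u₀ u r) (he : -1 < 2 * e)
    (hO : deriv u =O[𝓝[<] r] fun x => (r - x) ^ e) :
    IntegrableOn (fun x => deriv u x ^ 2) (Ioo (-r) r) := by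
  have hodd : ∀ x, deriv u (-x) = -deriv u x := fun x => by
    simpa [funext hsol.2.2.1] using deriv_comp_neg (f := u) (x := -x)
  have hcont : ContinuousOn (deriv u) (Ico 0 r) :=
    (hsol.contDiffOn.deriv_of_isOpen isOpen_Ioo (m := 0) (by norm_num)).continuousOn.mono
      fun x hx => ⟨by linarith [hx.1, hsol.radius_pos], hx.2⟩
  refine integrableOn_Ioo_neg_of_even (fun x => by rw [hodd, neg_sq])
    (integrableOn_Ico_of_isBigO_rpow (hcont.pow 2) he ?_)
  refine (hO.pow 2).trans_eventuallyEq ?_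
  filter_upwards [self_mem_nhdsWithin] with x (hx : x < r)
  rw [← Real.rpow_natCast, ← Real.rpow_mul (sub_pos.mpr hx).le, mul_comm]
  norm_num

end IsPSol

theorem stmt8_general (Q : ℝ → ℝ) (A m : ℝ) (hQ : HypHEL Q A m)
    (u₀ : ℝ) (u : ℝ → ℝ) (r : ℝ)
    (hsol : IsPSol Q u₀ u (r : EReal))
    (hdec : ∀ x ∈ Set.Ioo 0 r, deriv u x < 0) :
    Filter.Tendsto
      (fun x => u x / ((A * (m+1)^2 / 2) ^ ((1:ℝ)/(m+1)) * (r - x) ^ ((2:ℝ)/(m+1))))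
      (nhdsWithin r (Set.Iio r)) (nhds 1) ∧
    Filter.Tendsto
      (fun x => deriv u x /
        (-(2/(m+1)) * (A * (m+1)^2 / 2) ^ ((1:ℝ)/(m+1)) * (r - x) ^ ((1-m)/(m+1))))
      (nhdsWithin r (Set.Iio r)) (nhds 1) ∧
    MeasureTheory.IntegrableOn (fun x => (deriv u x)^2) (Set.Ioo (-r) r) := by
  obtain ⟨⟨hH, hm3, hC1⟩, -⟩ := hQ
  obtain ⟨-, -, -, hA, hm, -⟩ := id hH
  have hm1 : 0 < m + 1 := by linarith
  have hk : 0 < √(2 * A) := by positivity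
  have hnear : ∀ᶠ x in 𝓝[<] r, x ∈ Ioo 0 r := Ioo_mem_nhdsLT hsol.radius_pos
  have hu : ∀ᶠ x in 𝓝[<] r, HasDerivAt u (deriv u x) x :=
    hnear.mono fun x hx => hsol.hasDerivAt ⟨by linarith [hx.1, hsol.radius_pos], hx.2⟩
  have hpos : ∀ᶠ x in 𝓝[<] r, 0 < u x := hsol.tendsto_nhdsGT_zero self_mem_nhdsWithin
  have hlim := hsol.tendsto_nhdsGT_zero.mono_right nhdsWithin_le_nhds
  have hder := hsol.tendsto_deriv_div_rpow hH hC1 (hnear.mono hdec)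
  have hconst : ((m + 1) / 2 * √(2 * A)) ^ ((m + 1) / 2)⁻¹ =
      (A * (m + 1) ^ 2 / 2) ^ ((1:ℝ) / (m + 1)) := by
    rw [inv_div, show (2:ℝ) / (m + 1) = 2 * (1 / (m + 1)) by ring, Real.rpow_mul (by positivity),
      Real.rpow_two, mul_pow, Real.sq_sqrt (by positivity)]
    ring_nf
  have h1 := tendsto_div_rpow_sub_of_tendsto_deriv (half_pos hm1) hk hu hpos hlim hder
  have h2 := tendsto_deriv_div_rpow_sub_of_tendsto_deriv (half_pos hm1) hk hu hpos hlim hder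
  rw [hconst, inv_div] at h1 h2
  rw [div_sub_one hm1.ne', show (2:ℝ) - (m + 1) = 1 - m by ring] at h2
  refine ⟨h1, h2, hsol.integrableOn_sq_deriv (e := (1 - m) / (m + 1)) ?_ ?_⟩
  · rw [← mul_div_assoc, lt_div_iff₀ hm1]
    linarith
  · exact (isEquivalent_of_tendsto_one h2).isBigO.trans (isBigO_const_mul_self _ _ _)

/-- Asymptotics near the contact line: for `u₀ ∈ 𝒜` and `u` the solution of `(P_{u₀})`
with support `[-r̄,r̄]` and `u' < 0` on `(0,r̄)`,
`u(x) ~ (A(m+1)²/2)^{1/(m+1)} (r̄-x)^{2/(m+1)}` and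
`u'(x) ~ -(2/(m+1))(A(m+1)²/2)^{1/(m+1)} (r̄-x)^{2/(m+1)-1}` as `x → r̄⁻`;
in particular `∫_{-r̄}^{r̄} u'² < ∞`. -/
theorem stmt8 (Q : ℝ → ℝ) (A m : ℝ) (hQ : HypHEL Q A m)
    (u₀ : ℝ) (hu₀ : u₀ ∈ Aset Q) (u : ℝ → ℝ) (r : ℝ) (hr : 0 < r)
    (hsol : IsPSol Q u₀ u (r : EReal)) (hsupp : tsupport u = Set.Icc (-r) r)
    (hdec : ∀ x ∈ Set.Ioo 0 r, deriv u x < 0) :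
    Filter.Tendsto
      (fun x => u x / ((A * (m+1)^2 / 2) ^ ((1:ℝ)/(m+1)) * (r - x) ^ ((2:ℝ)/(m+1))))
      (nhdsWithin r (Set.Iio r)) (nhds 1) ∧
    Filter.Tendsto
      (fun x => deriv u x /
        (-(2/(m+1)) * (A * (m+1)^2 / 2) ^ ((1:ℝ)/(m+1)) * (r - x) ^ ((1-m)/(m+1))))
      (nhdsWithin r (Set.Iio r)) (nhds 1) ∧
    MeasureTheory.IntegrableOn (fun x => (deriv u x)^2) (Set.Ioo (-r) r) :=
  stmt8_general Q A m hQ u₀ u r hsol hdec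
end
end

section
/- Assume N = 1 and Q satisfies (H-EL) and (H-R). Then sup 𝒜 = e_*, and in particular 𝒜 ⊆ (0, e_*). Moreover, if e_* = +∞ and z₀ := sup{z > 0 : for every z' ∈ (0,z) the set {s > 0 : R(s) = z'} has at most one element} is finite, then, with e_min := min{s > 0 : R(s) = z₀} and e_max := max{s > 0 : R(s) = z₀}, one has 𝒜 ⊆ (0, e_min) ∪ (e_max, +∞). -/
open MeasureTheory Filter Set

noncomputable section

/-!
Since `Q(s) ~ A s^(1-m)` with `m > 1`, `R` tends to `+∞` at `0⁺`, so on every `(0, b]` it attains a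
minimum. If `e_* < ∞` and `b < e_*`, this minimum exceeds `R(e_*)`, and every level in between is
first reached at a point of `(b, e_*)`. Such a first-hitting point has `R' ≤ 0`; by Sard's lemma
they cannot all be critical, and one with `R' < 0` lies in `𝒜`. If `e_* = +∞`, Darboux's theorem
and (H-R) give `R' < 0` near `+∞`, so `R` decreases there, is positive (as `Q` is bounded below),
and any point far out where `R` undercuts its minimum on `(0, b]` lies in `𝒜`. Finally, a point of
`𝒜` in `[e_min, e_max]` either produces a dip of `R` below `z₀` between two solutions of `R = z₀`,
hence a level below `z₀` with two preimages, or is the only solution of `R = z₀`; in the latter case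
levels slightly above `z₀` are only taken just left of it, where `R` is strictly decreasing, which
contradicts the maximality of `z₀`.
-/

open Topology

namespace PositiveHalfLine

variable {f : ℝ → ℝ}

def recordSet (f : ℝ → ℝ) : Set ℝ :=
  {s | 0 < s ∧ deriv f s < 0 ∧ ∀ t, 0 < t → t < s → f s < f t}

lemma exists_forall_le_on_Ioc (hf : ContinuousOn f (Ioi 0)) (htop : Tendsto f (𝓝[>] 0) atTop)
    {b : ℝ} (hb : 0 < b) : ∃ p ∈ Ioc 0 b, ∀ t ∈ Ioc 0 b, f p ≤ f t := by
  obtain ⟨u, hu, hsub⟩ :=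
    mem_nhdsGT_iff_exists_Ioo_subset.1 (htop.eventually (eventually_gt_atTop (f b)))
  have hu0 : (0 : ℝ) < u := hu
  set ε := min (u / 2) b
  have hε : 0 < ε := lt_min (half_pos hu0) hb
  obtain ⟨p, hp, hmin⟩ := isCompact_Icc.exists_isMinOn (f := f) ⟨ε, le_rfl, min_le_right _ _⟩
    (hf.mono fun t ht => hε.trans_le ht.1)
  refine ⟨p, ⟨hε.trans_le hp.1, hp.2⟩, fun t ht => ?_⟩
  rcases le_or_gt ε t with h | h
  · exact hmin ⟨h, ht.2⟩
  · have hbt : f b < f t := hsub ⟨ht.1, h.trans ((min_le_left _ _).trans_lt (half_lt_self hu0))⟩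
    exact (hmin ⟨min_le_right _ _, le_rfl⟩).trans hbt.le

lemma exists_gt_lt_of_forall_le_on_Ioc (hno : ∀ p, 0 < p → ∃ t, 0 < t ∧ f t < f p) {b p : ℝ}
    (hp : p ∈ Ioc 0 b) (hmin : ∀ t ∈ Ioc 0 b, f p ≤ f t) : ∃ t, b < t ∧ f t < f p := by
  obtain ⟨t, ht, hlt⟩ := hno p hp.1
  exact ⟨t, lt_of_not_ge fun htb => (hmin t ⟨ht, htb⟩).not_gt hlt, hlt⟩

lemma exists_first_hit (hf : ContinuousOn f (Ioi 0)) (htop : Tendsto f (𝓝[>] 0) atTop)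
    {c y : ℝ} (hc : 0 < c) (hy : f c ≤ y) :
    ∃ s ∈ Ioc 0 c, f s = y ∧ ∀ t, 0 < t → t < s → y < f t := by
  obtain ⟨u, hu, hsub⟩ :=
    mem_nhdsGT_iff_exists_Ioo_subset.1 (htop.eventually (eventually_gt_atTop y))
  have hu0 : (0 : ℝ) < u := hu
  set ε := min (u / 2) c
  have hε : 0 < ε := lt_min (half_pos hu0) hc
  have hεu : ε < u := (min_le_left _ _).trans_lt (half_lt_self hu0)
  set T := Icc ε c ∩ f ⁻¹' Iic y
  have hT : IsCompact T := isCompact_Icc.of_isClosed_subset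
    ((hf.mono fun _ ht => hε.trans_le ht.1).preimage_isClosed_of_isClosed isClosed_Icc
      isClosed_Iic) inter_subset_left
  have hsT : sInf T ∈ T := hT.sInf_mem ⟨c, ⟨min_le_right _ _, le_rfl⟩, hy⟩
  set s := sInf T
  have hs : 0 < s := hε.trans_le hsT.1.1
  have hlt : ∀ t, 0 < t → t < s → y < f t := by
    intro t ht hts
    rcases lt_or_ge t ε with h | h
    · exact hsub ⟨ht, h.trans hεu⟩
    · by_contra! hty
      exact hts.not_ge (csInf_le hT.bddBelow ⟨⟨h, hts.le.trans hsT.1.2⟩, hty⟩)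
  refine ⟨s, ⟨hs, hsT.1.2⟩, le_antisymm hsT.2 (not_lt.1 fun hsy => ?_), hlt⟩
  -- otherwise `f` would already take the value `y` in `(ε / 2, s)`
  have hε2 : y < f (ε / 2) := hsub ⟨half_pos hε, (half_le_self hε.le).trans_lt hεu⟩
  obtain ⟨t, ht, hty⟩ := intermediate_value_Ioo' ((half_le_self hε.le).trans hsT.1.1)
    (hf.mono fun _ ht => (half_pos hε).trans_le ht.1) ⟨hsy, hε2⟩
  exact (hlt t ((half_pos hε).trans ht.1) ht.2).ne' hty

lemma deriv_nonpos_of_le_left {a s : ℝ} (has : a < s) (hf : DifferentiableAt ℝ f s)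
    (h : ∀ t, a < t → t < s → f s ≤ f t) : deriv f s ≤ 0 := by
  have hslope : Tendsto (slope f s) (𝓝[<] s) (𝓝 (deriv f s)) :=
    (hasDerivAt_iff_tendsto_slope.1 hf.hasDerivAt).mono_left
      (nhdsWithin_mono _ fun _ ht => ne_of_lt ht)
  refine le_of_tendsto hslope ?_
  filter_upwards [Ioo_mem_nhdsLT has] with t ht
  rw [slope_def_field]
  exact div_nonpos_of_nonneg_of_nonpos (sub_nonneg.2 (h t ht.1 ht.2)) (sub_nonpos.2 ht.2.le)

lemma exists_lt_right_of_deriv_neg {s u : ℝ} (hsu : s < u) (hf : DifferentiableAt ℝ f s)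
    (hd : deriv f s < 0) : ∃ t ∈ Ioo s u, f t < f s := by
  have hslope : Tendsto (slope f s) (𝓝[>] s) (𝓝 (deriv f s)) :=
    (hasDerivAt_iff_tendsto_slope.1 hf.hasDerivAt).mono_left
      (nhdsWithin_mono _ fun _ ht => ne_of_gt ht)
  obtain ⟨t, hneg, ht⟩ :=
    ((hslope.eventually_lt_const hd).and (Ioo_mem_nhdsGT hsu)).exists
  rw [slope_def_field, div_neg_iff] at hneg
  refine ⟨t, ht, ?_⟩
  rcases hneg with ⟨-, h⟩ | ⟨h, -⟩
  · linarith [ht.1]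
  · linarith

lemma volume_image_eq_zero_of_hasDerivWithinAt_zero {s : Set ℝ}
    (hf : ∀ x ∈ s, HasDerivWithinAt f 0 s x) : volume (f '' s) = 0 :=
  addHaar_image_eq_zero_of_det_fderivWithin_eq_zero volume (f' := fun _ => 0)
    (fun x hx => by simpa using (hf x hx).hasFDerivWithinAt)
    (fun _ _ => by simp [ContinuousLinearMap.det])

/-- Sard: the levels in `(f e, c)` are first reached at points of `(b, e)`, and these cannot all
be critical points. -/
lemma exists_mem_recordSet_gt (hd : ∀ x, 0 < x → DifferentiableAt ℝ f x)
    (htop : Tendsto f (𝓝[>] 0) atTop) {b c e : ℝ} (hb : 0 < b) (hbe : b < e) (hec : f e < c)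
    (hc : ∀ t ∈ Ioc 0 b, c ≤ f t) : ∃ s ∈ recordSet f, b < s := by
  have hf : ContinuousOn f (Ioi 0) := fun x hx => (hd x hx).continuousAt.continuousWithinAt
  by_contra! hno
  have himage : Ioo (f e) c ⊆ f '' {x | 0 < x ∧ deriv f x = 0} := by
    intro y hy
    obtain ⟨s, hs, hsy, hlt⟩ := exists_first_hit hf htop (hb.trans hbe) hy.1.le
    have hbs : b < s := lt_of_not_ge fun h => (hc s ⟨hs.1, h⟩).not_gt (hsy ▸ hy.2)
    have hrec : ∀ t, 0 < t → t < s → f s < f t := fun t ht hts => hsy ▸ hlt t ht hts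
    have hd0 : deriv f s ≤ 0 :=
      deriv_nonpos_of_le_left hs.1 (hd s hs.1) fun t ht hts => (hrec t ht hts).le
    exact ⟨s, ⟨hs.1, hd0.eq_of_not_lt fun hneg => (hno s ⟨hs.1, hneg, hrec⟩).not_gt hbs⟩, hsy⟩
  have hnull : volume (f '' {x | 0 < x ∧ deriv f x = 0}) = 0 :=
    volume_image_eq_zero_of_hasDerivWithinAt_zero fun x hx =>
      (hx.2 ▸ (hd x hx.1).hasDerivAt).hasDerivWithinAt
  have := measure_mono_null himage hnull
  rw [Real.volume_Ioo, ENNReal.ofReal_eq_zero] at this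
  linarith

lemma recordSet_subset_Ioo {e : ℝ} (he : 0 < e) (hmin : ∀ t, 0 < t → f e ≤ f t) :
    recordSet f ⊆ Ioo 0 e := by
  rintro s ⟨hs, hneg, hrec⟩
  refine ⟨hs, lt_of_le_of_ne (le_of_not_gt fun hes => (hrec e he hes).not_ge (hmin s hs)) ?_⟩
  rintro rfl
  have hloc : IsLocalMin f s := Filter.mem_of_superset (Ioi_mem_nhds he) hmin
  exact hneg.ne hloc.deriv_eq_zero

lemma isLUB_recordSet (hd : ∀ x, 0 < x → DifferentiableAt ℝ f x)
    (htop : Tendsto f (𝓝[>] 0) atTop) {e : ℝ} (he : 0 < e) (hmin : ∀ t, 0 < t → f e ≤ f t)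
    (hleast : ∀ s, 0 < s → (∀ t, 0 < t → f s ≤ f t) → e ≤ s) : IsLUB (recordSet f) e := by
  have hf : ContinuousOn f (Ioi 0) := fun x hx => (hd x hx).continuousAt.continuousWithinAt
  refine ⟨fun s hs => (recordSet_subset_Ioo he hmin hs).2.le, fun b hb => ?_⟩
  by_contra! hbe
  set b' := max b (e / 2)
  have hb' : 0 < b' := (half_pos he).trans_le (le_max_right _ _)
  have hb'e : b' < e := max_lt hbe (half_lt_self he)
  obtain ⟨p, hp, hpmin⟩ := exists_forall_le_on_Ioc hf htop hb'
  have hep : f e < f p := lt_of_not_ge fun hpe =>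
    (hleast p hp.1 fun t ht => hpe.trans (hmin t ht)).not_gt (hp.2.trans_lt hb'e)
  obtain ⟨s, hs, hbs⟩ := exists_mem_recordSet_gt hd htop hb' hb'e hep hpmin
  exact (hb hs).not_gt ((le_max_left _ _).trans_lt hbs)

lemma deriv_neg_of_forall_deriv_ne_zero (hd : ∀ x, 0 < x → DifferentiableAt ℝ f x)
    (htop : Tendsto f (𝓝[>] 0) atTop) (hno : ∀ p, 0 < p → ∃ t, 0 < t ∧ f t < f p) {X : ℝ}
    (hX : 0 < X) (hne : ∀ s, X < s → deriv f s ≠ 0) : ∀ s, X < s → deriv f s < 0 := by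
  have hf : ContinuousOn f (Ioi 0) := fun x hx => (hd x hx).continuousAt.continuousWithinAt
  refine (hasDerivWithinAt_forall_lt_or_forall_gt_of_forall_ne (convex_Ioi X)
    (fun s hs => (hd s (hX.trans hs)).hasDerivAt.hasDerivWithinAt) hne).resolve_right
    fun hpos => ?_
  -- if `f` increased on `(X, ∞)`, its minimum on `(0, X + 1]` would be global
  have hmono : StrictMonoOn f (Ioi X) :=
    strictMonoOn_of_deriv_pos (convex_Ioi X) (hf.mono fun _ hs => hX.trans hs)
      (by simpa only [interior_Ioi] using hpos)
  obtain ⟨p, hp, hmin⟩ := exists_forall_le_on_Ioc hf htop (by linarith : (0 : ℝ) < X + 1)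
  obtain ⟨t, ht, hlt⟩ := exists_gt_lt_of_forall_le_on_Ioc hno hp hmin
  have := hmono (show X < X + 1 by linarith) (show X < t by linarith) ht
  linarith [hmin (X + 1) ⟨by linarith, le_rfl⟩]

lemma pos_of_strictAntiOn_Ioi {X B : ℝ} (hanti : StrictAntiOn f (Ioi X))
    (hlow : ∀ t, X < t → B / t ≤ f t) {s : ℝ} (hs : X < s) : 0 < f s := by
  have hnonneg : 0 ≤ f (s + 1) := by
    refine le_of_tendsto ((tendsto_const_nhds (x := B)).div_atTop tendsto_id) ?_
    filter_upwards [eventually_gt_atTop (s + 1)] with t ht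
    exact (hlow t (by linarith)).trans
      (hanti (show X < s + 1 by linarith) (show X < t by linarith) ht).le
  exact hnonneg.trans_lt (hanti hs (show X < s + 1 by linarith) (by linarith))

lemma pos_of_strictAntiOn_Ioi_of_noGlobalMin (hf : ContinuousOn f (Ioi 0))
    (htop : Tendsto f (𝓝[>] 0) atTop) (hno : ∀ p, 0 < p → ∃ t, 0 < t ∧ f t < f p) {X B : ℝ}
    (hX : 0 < X) (hanti : StrictAntiOn f (Ioi X)) (hlow : ∀ t, X < t → B / t ≤ f t) :
    ∀ s, 0 < s → 0 < f s := by
  intro s hs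
  rcases lt_or_ge X s with hXs | hsX
  · exact pos_of_strictAntiOn_Ioi hanti hlow hXs
  obtain ⟨p, hp, hmin⟩ := exists_forall_le_on_Ioc hf htop hX
  obtain ⟨t, ht, hlt⟩ := exists_gt_lt_of_forall_le_on_Ioc hno hp hmin
  linarith [pos_of_strictAntiOn_Ioi hanti hlow ht, hmin s ⟨hs, hsX⟩]

lemma not_bddAbove_recordSet (hf : ContinuousOn f (Ioi 0)) (htop : Tendsto f (𝓝[>] 0) atTop)
    (hno : ∀ p, 0 < p → ∃ t, 0 < t ∧ f t < f p) {X : ℝ} (hX : 0 < X)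
    (hneg : ∀ s, X < s → deriv f s < 0) (hanti : StrictAntiOn f (Ioi X)) :
    ¬ BddAbove (recordSet f) := by
  rintro ⟨b, hb⟩
  set Y := max b X + 1
  have hXY : X < Y := by linarith [le_max_right b X]
  obtain ⟨p, hp, hpmin⟩ := exists_forall_le_on_Ioc hf htop (hX.trans hXY)
  obtain ⟨s, hYs, hsp⟩ := exists_gt_lt_of_forall_le_on_Ioc hno hp hpmin
  have hrec : ∀ t, 0 < t → t < s → f s < f t := fun t ht hts => by
    rcases le_or_gt t Y with htY | hYt
    · exact hsp.trans_le (hpmin t ⟨ht, htY⟩)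
    · exact hanti (hXY.trans hYt) (hXY.trans hYs) hts
  have := hb ⟨hX.trans (hXY.trans hYs), hneg s (hXY.trans hYs), hrec⟩
  linarith [le_max_left b X]

def posLevel (f : ℝ → ℝ) (z : ℝ) : Set ℝ := {s | 0 < s ∧ f s = z}

def subsingletonLevels (f : ℝ → ℝ) : Set ℝ :=
  {z | 0 < z ∧ ∀ z' ∈ Ioo 0 z, (posLevel f z').Subsingleton}

lemma posLevel_subsingleton_of_lt_sSup (hbdd : BddAbove (subsingletonLevels f))
    (hne : (subsingletonLevels f).Nonempty) {z : ℝ}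
    (hz : z ∈ Ioo 0 (sSup (subsingletonLevels f))) : (posLevel f z).Subsingleton := by
  obtain ⟨w, hw, hzw⟩ := (lt_csSup_iff hbdd hne).1 hz.2
  exact hw.2 z ⟨hz.1, hzw⟩

lemma min_mem_subsingletonLevels {X p : ℝ} (hanti : StrictAntiOn f (Ioi X))
    (hpos : ∀ x, 0 < x → 0 < f x) (hp : p ∈ Ioc 0 X) (hmin : ∀ t ∈ Ioc 0 X, f p ≤ f t) :
    f p ∈ subsingletonLevels f := by
  have htail : ∀ z < f p, posLevel f z ⊆ Ioi X := fun z hz x hx =>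
    lt_of_not_ge fun hxX => (hmin x ⟨hx.1, hxX⟩).not_gt (hx.2 ▸ hz)
  exact ⟨hpos p hp.1, fun z hz x hx y hy =>
    hanti.injOn (htail z hz.2 hx) (htail z hz.2 hy) (hx.2.trans hy.2.symm)⟩

lemma isCompact_posLevel (hf : ContinuousOn f (Ioi 0)) (htop : Tendsto f (𝓝[>] 0) atTop)
    {X w z : ℝ} (hanti : StrictAntiOn f (Ioi X)) (hXw : X < w) (hfw : f w < z) :
    IsCompact (posLevel f z) := by
  obtain ⟨ε, hε, hsub⟩ :=
    mem_nhdsGT_iff_exists_Ioo_subset.1 (htop.eventually (eventually_gt_atTop z))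
  have hε0 : (0 : ℝ) < ε := hε
  have hIcc : posLevel f z = Icc ε w ∩ f ⁻¹' {z} := by
    refine Subset.antisymm (fun x hx => ⟨⟨le_of_not_gt fun hxε => ?_, le_of_not_gt fun hwx => ?_⟩,
      hx.2⟩) fun x hx => ⟨hε0.trans_le hx.1.1, hx.2⟩
    · exact (hsub ⟨hx.1, hxε⟩ : z < f x).ne' hx.2
    · exact ((hanti hXw (hXw.trans hwx) hwx).trans hfw).ne hx.2
  rw [hIcc]
  exact isCompact_Icc.of_isClosed_subset ((hf.mono fun _ hx => hε0.trans_le hx.1)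
    |>.preimage_isClosed_of_isClosed isClosed_Icc isClosed_singleton) inter_subset_left

lemma not_subsingleton_posLevel_of_dip {a b t z z' : ℝ} (ha : 0 < a)
    (hf : ContinuousOn f (Icc a b)) (hat : a < t) (htb : t < b) (hfa : f a = z) (hfb : f b = z)
    (hz' : z' ∈ Ioo (f t) z) : ¬ (posLevel f z').Subsingleton := by
  obtain ⟨x, hx, hfx⟩ := intermediate_value_Ioo' hat.le
    (hf.mono (Icc_subset_Icc_right htb.le)) (hfa ▸ hz')
  obtain ⟨y, hy, hfy⟩ := intermediate_value_Ioo htb.le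
    (hf.mono (Icc_subset_Icc_left hat.le)) (hfb ▸ hz')
  exact fun h => (hx.2.trans hy.1).ne (h ⟨ha.trans hx.1, hfx⟩ ⟨ha.trans (hat.trans hy.1), hfy⟩)

lemma lt_of_deriv_neg_of_forall_ne {s t : ℝ} (hf : ContinuousOn f (Ioi s))
    (hd : DifferentiableAt ℝ f s) (hneg : deriv f s < 0) (hne : ∀ u, s < u → f u ≠ f s)
    (hst : s < t) : f t < f s := by
  by_contra! hle
  obtain ⟨u, hu, hlt⟩ := exists_lt_right_of_deriv_neg hst hd hneg
  obtain ⟨v, hv, hfv⟩ := intermediate_value_Icc hu.2.le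
    (hf.mono fun _ hx => hu.1.trans_le hx.1) ⟨hlt.le, hle⟩
  exact hne v (hu.1.trans_le hv.1) hfv

-- Levels slightly above `f s` are taken only just left of `s`, where `f` is strictly decreasing.
lemma exists_mem_subsingletonLevels_gt (hd : ∀ x, 0 < x → DifferentiableAt ℝ f x)
    (hd' : ContinuousOn (deriv f) (Ioi 0)) (htop : Tendsto f (𝓝[>] 0) atTop)
    (hpos : ∀ x, 0 < x → 0 < f x) {s : ℝ} (hs : s ∈ recordSet f)
    (hlevel : ∀ t ∈ posLevel f (f s), t = s)
    (hsub : ∀ z ∈ Ioo 0 (f s), (posLevel f z).Subsingleton) :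
    ∃ z ∈ subsingletonLevels f, f s < z := by
  obtain ⟨hs, hneg, hrec⟩ := hs
  have hf : ContinuousOn f (Ioi 0) := fun x hx => (hd x hx).continuousAt.continuousWithinAt
  have hev : ∀ᶠ t in 𝓝[≤] s, deriv f t < 0 ∧ 0 < t :=
    nhdsWithin_le_nhds <| ((hd'.continuousAt (Ioi_mem_nhds hs)).eventually_lt_const hneg).and
      (eventually_gt_nhds hs)
  obtain ⟨l, hls : l < s, hIoc⟩ := mem_nhdsLE_iff_exists_Ioc_subset.1 hev
  have hanti : StrictAntiOn f (Ioc l s) :=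
    strictAntiOn_of_deriv_neg (convex_Ioc l s) (hf.mono fun _ ht => (hIoc ht).2)
      (by simpa only [interior_Ioc] using fun t ht => (hIoc (Ioo_subset_Ioc_self ht)).1)
  obtain ⟨a, hla, has⟩ := exists_between hls
  have ha : 0 < a := (hIoc ⟨hla, has.le⟩).2
  obtain ⟨p, hp, hmin⟩ := exists_forall_le_on_Ioc hf htop ha
  have hsp : f s < f p := hrec p hp.1 (hp.2.trans_lt has)
  refine ⟨f p, ⟨hpos p hp.1, fun z hz => ?_⟩, hsp⟩
  rcases lt_or_ge z (f s) with hzs | hsz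
  · exact hsub z ⟨hz.1, hzs⟩
  have hloc : posLevel f z ⊆ Ioc l s := by
    rintro x ⟨hx, hfx⟩
    refine ⟨hla.trans (lt_of_not_ge fun hxa => ?_), le_of_not_gt fun hsx => ?_⟩
    · exact (hmin x ⟨hx, hxa⟩).not_gt (hfx ▸ hz.2)
    · refine (lt_of_deriv_neg_of_forall_ne (hf.mono fun _ hu => hs.trans hu) (hd s hs) hneg
        (fun u hsu hu => ?_) hsx).not_ge (hfx ▸ hsz)
      exact hsu.ne' (hlevel u ⟨hs.trans hsu, hu⟩)
  exact fun x hx y hy => hanti.injOn (hloc hx) (hloc hy) (hx.2.trans hy.2.symm)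

lemma recordSet_subset_Iio_union_Ioi (hd : ∀ x, 0 < x → DifferentiableAt ℝ f x)
    (hd' : ContinuousOn (deriv f) (Ioi 0)) (htop : Tendsto f (𝓝[>] 0) atTop)
    (hno : ∀ p, 0 < p → ∃ t, 0 < t ∧ f t < f p) (hpos : ∀ x, 0 < x → 0 < f x) {X : ℝ}
    (hX : 0 < X) (hanti : StrictAntiOn f (Ioi X)) (hbdd : BddAbove (subsingletonLevels f)) :
    recordSet f ⊆ Iio (sInf (posLevel f (sSup (subsingletonLevels f)))) ∪
      Ioi (sSup (posLevel f (sSup (subsingletonLevels f)))) := by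
  rintro s ⟨hs, hneg, hrec⟩
  have hf : ContinuousOn f (Ioi 0) := fun x hx => (hd x hx).continuousAt.continuousWithinAt
  set z₀ := sSup (subsingletonLevels f)
  set S := posLevel f z₀
  obtain ⟨p, hp, hmin⟩ := exists_forall_le_on_Ioc hf htop hX
  have hpZ := min_mem_subsingletonLevels hanti hpos hp hmin
  have hsub : ∀ z ∈ Ioo 0 z₀, (posLevel f z).Subsingleton :=
    fun z => posLevel_subsingleton_of_lt_sSup hbdd ⟨_, hpZ⟩
  obtain ⟨w, hXw, hw⟩ := exists_gt_lt_of_forall_le_on_Ioc hno hp hmin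
  have hS : IsCompact S := isCompact_posLevel hf htop hanti hXw (hw.trans_le (le_csSup hbdd hpZ))
  simp only [mem_union, mem_Iio, mem_Ioi]
  by_contra! hsS
  obtain hSe | hSne := S.eq_empty_or_nonempty
  · exact hs.not_ge (by simpa [hSe] using hsS.2)
  obtain ⟨hmin₀, hfmin⟩ := hS.sInf_mem hSne
  obtain ⟨-, hfmax⟩ := hS.sSup_mem hSne
  -- between two solutions of `f = z₀`, a dip below `z₀` would make a level below `z₀` non-injective
  have hdip : ∀ t ∈ Ioo (sInf S) (sSup S), z₀ ≤ f t := fun t ht => le_of_not_gt fun hlt =>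
    not_subsingleton_posLevel_of_dip hmin₀ (hf.mono fun _ hx => hmin₀.trans_le hx.1) ht.1 ht.2
      hfmin hfmax (z' := (f t + z₀) / 2) ⟨by linarith, by linarith⟩
      (hsub _ ⟨by linarith [hpos t (hmin₀.trans ht.1)], by linarith⟩)
  rcases hsS.1.lt_or_eq with hlt | heq
  · have hfs : f s < z₀ := hfmin ▸ hrec _ hmin₀ hlt
    exact (hdip s ⟨hlt, hsS.2.lt_of_ne fun h => hfs.ne (h ▸ hfmax)⟩).not_gt hfs
  have hfs : f s = z₀ := heq ▸ hfmin
  rcases hsS.2.lt_or_eq with hlt | heq'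
  · obtain ⟨t, ht, hft⟩ := exists_lt_right_of_deriv_neg hlt (hd s hs) hneg
    exact (hdip t ⟨heq ▸ ht.1, ht.2⟩).not_gt (hfs ▸ hft)
  have hlevel : ∀ t ∈ posLevel f (f s), t = s := fun t ht => by
    rw [hfs] at ht
    exact le_antisymm (heq' ▸ le_csSup hS.bddAbove ht) (heq ▸ csInf_le hS.bddBelow ht)
  obtain ⟨z, hz, hsz⟩ :=
    exists_mem_subsingletonLevels_gt hd hd' htop hpos ⟨hs, hneg, hrec⟩ hlevel (hfs ▸ hsub)
  linarith [le_csSup hbdd hz]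

end PositiveHalfLine

section Rfun

variable {Q : ℝ → ℝ}

lemma differentiableAt_Rfun (hd : ∀ s, 0 < s → DifferentiableAt ℝ Q s) {s : ℝ} (hs : 0 < s) :
    DifferentiableAt ℝ (Rfun Q) s :=
  (hd s hs).div differentiableAt_id hs.ne'

lemma continuousOn_deriv_Rfun (hd : ∀ s, 0 < s → DifferentiableAt ℝ Q s)
    (hd' : ContinuousOn (deriv Q) (Ioi 0)) : ContinuousOn (deriv (Rfun Q)) (Ioi 0) := by
  have hQ : ContinuousOn Q (Ioi 0) := fun x hx => (hd x hx).continuousAt.continuousWithinAt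
  refine (((hd'.mul continuousOn_id).sub hQ).div (continuousOn_id.pow 2)
    fun s hs => pow_ne_zero 2 (ne_of_gt hs)).congr fun s hs => ?_
  have h : HasDerivAt (Rfun Q) _ s := (hd s hs).hasDerivAt.div (hasDerivAt_id s) (ne_of_gt hs)
  simpa using h.deriv

lemma tendsto_Rfun_nhdsGT_zero {A m : ℝ} (hH : HypH Q A m) :
    Tendsto (Rfun Q) (𝓝[>] 0) atTop := by
  obtain ⟨-, -, -, hA, hm, hlim⟩ := hH
  have hpow : Tendsto (fun s : ℝ => s ^ m) (𝓝[>] 0) (𝓝[>] 0) := by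
    refine tendsto_nhdsWithin_iff.2
      ⟨?_, eventually_nhdsWithin_of_forall fun s hs => Real.rpow_pos_of_pos hs m⟩
    simpa [Real.zero_rpow (by linarith : m ≠ 0)] using
      (Real.continuousAt_rpow_const 0 m (Or.inr (by linarith))).tendsto.mono_left
        nhdsWithin_le_nhds
  -- `R(s) = (Q(s) / (A s^(1-m))) · A s^(-m)`: one factor tends to `1`, the other to `∞`
  refine (hlim.pos_mul_atTop one_pos
    ((tendsto_inv_nhdsGT_zero.comp hpow).const_mul_atTop hA)).congr'
    (eventually_nhdsWithin_of_forall fun s (hs : 0 < s) => ?_)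
  have hsm : s ^ (1 - m) = s * (s ^ m)⁻¹ := by
    rw [sub_eq_add_neg, Real.rpow_add hs, Real.rpow_one, Real.rpow_neg hs.le]
  have : s ^ m ≠ 0 := (Real.rpow_pos_of_pos hs m).ne'
  simp only [Function.comp_apply, Rfun, hsm]
  field_simp

lemma div_le_Rfun {B : ℝ} (hB : B ∈ lowerBounds (range Q)) {t : ℝ} (ht : 0 < t) :
    B / t ≤ Rfun Q t :=
  div_le_div_of_nonneg_right (hB ⟨t, rfl⟩) ht.le

end Rfun

open PositiveHalfLine in
/-- Bounds on the maximal height: `sup 𝒜 = e_*` (hence `𝒜 ⊆ (0,e_*)`); moreover, when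
`e_* = +∞` and the level `z₀` at which `R` ceases to be injective is finite,
`𝒜 ⊆ (0, e_min) ∪ (e_max, +∞)`. -/
theorem stmt9 (Q : ℝ → ℝ) (A m : ℝ) (hQ : HypHEL Q A m) (hR : HypHR Q) :
    (∀ e : ℝ, IsEStar Q e → IsLUB (Aset Q) e ∧ Aset Q ⊆ Set.Ioo 0 e) ∧
    (EStarInfinite Q →
      ¬ BddAbove (Aset Q) ∧
      ∀ z₀ emin emax : ℝ,
        BddAbove {z : ℝ | 0 < z ∧ ∀ z' ∈ Set.Ioo 0 z,
          Set.Subsingleton {s : ℝ | 0 < s ∧ Rfun Q s = z'}} →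
        z₀ = sSup {z : ℝ | 0 < z ∧ ∀ z' ∈ Set.Ioo 0 z,
          Set.Subsingleton {s : ℝ | 0 < s ∧ Rfun Q s = z'}} →
        emin = sInf {s : ℝ | 0 < s ∧ Rfun Q s = z₀} →
        emax = sSup {s : ℝ | 0 < s ∧ Rfun Q s = z₀} →
        Aset Q ⊆ Set.Iio emin ∪ Set.Ioi emax) := by
  obtain ⟨⟨hH, -, hd, hd'⟩, -⟩ := hQ
  have hRd : ∀ s, 0 < s → DifferentiableAt ℝ (Rfun Q) s := fun s => differentiableAt_Rfun hd
  have hRc : ContinuousOn (Rfun Q) (Ioi 0) := fun s hs =>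
    (hRd s hs).continuousAt.continuousWithinAt
  have htop := tendsto_Rfun_nhdsGT_zero hH
  refine ⟨fun e ⟨he, hmin, hleast⟩ => ⟨isLUB_recordSet hRd htop he hmin hleast,
    recordSet_subset_Ioo he hmin⟩, fun hEI => ?_⟩
  have hno : ∀ p, 0 < p → ∃ t, 0 < t ∧ Rfun Q t < Rfun Q p := by
    simpa [EStarInfinite] using hEI
  obtain ⟨δ, hδ, -, hne⟩ := hR
  have hX : 0 < 1 / δ := by positivity
  have hneg := deriv_neg_of_forall_deriv_ne_zero hRd htop hno hX fun s hs => hne s (Or.inr hs)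
  have hanti : StrictAntiOn (Rfun Q) (Ioi (1 / δ)) :=
    strictAntiOn_of_deriv_neg (convex_Ioi _) (hRc.mono fun _ hs => hX.trans hs)
      fun s hs => hneg s (interior_subset hs)
  obtain ⟨B, hB⟩ := hH.2.2.1
  have hpos := pos_of_strictAntiOn_Ioi_of_noGlobalMin hRc htop hno hX hanti
    fun t ht => div_le_Rfun hB (hX.trans ht)
  refine ⟨not_bddAbove_recordSet hRc htop hno hX hneg hanti, ?_⟩
  rintro z₀ emin emax hbdd rfl rfl rfl
  exact recordSet_subset_Iio_union_Ioi hRd (continuousOn_deriv_Rfun hd hd') htop hno hpos hX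
    hanti hbdd
end
end
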